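/- arXiv:1907.08655 — 4 statements merged into one kernel-verified Lean document; each statement's English description precedes it below -/
import Mathlib

section
/- For 0 < λ < 1, μ > 0 and 0 < ρ < r_{λ,μ} irrational, the identity Ψ_ρ(λ,μ) = (1/(1−λ)) Σ_{h≥1} λ^{⌈h/ρ⌉} μ^h holds, where Ψ_ρ(λ,μ) = Σ_{k≥1} Σ_{1≤h≤kρ} λ^k μ^h. -/
/-!
`Psi lam mu rho` sums `λ^k μ^h` over the lattice points `1 ≤ h ≤ kρ`. Since `h ≤ kρ ↔ ⌈h/ρ⌉ ≤ k`,
summing over `k` first for fixed `h` gives the geometric tail `λ^⌈h/ρ⌉ / (1 - λ)`. The interchange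
is justified by nonnegativity: `λ^⌈h/ρ⌉ μ^h ≤ ((λ μ^ρ)^(1/ρ))^h`, and `λ μ^ρ < 1` for `ρ` below
the radius.
-/

open Finset

/-- The Hecke–Mahler series Ψ_ρ(λ,μ) = Σ_{k≥1} Σ_{1≤h≤kρ} λ^k μ^h. -/
noncomputable def Psi (lam mu rho : ℝ) : ℝ :=
  ∑' k : ℕ, ∑ h ∈ Finset.Icc 1 (⌊((k : ℝ) + 1) * rho⌋.toNat), lam ^ (k + 1) * mu ^ h

lemma mul_rpow_lt_one_of_lt_radius {lam mu rho : ℝ} (hlam0 : 0 < lam) (hlam1 : lam < 1)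
    (hmu : 0 < mu) (hrho0 : 0 < rho)
    (hrho1 : rho < if lam * mu < 1 then 1 else -Real.log lam / Real.log mu) :
    lam * mu ^ rho < 1 := by
  split_ifs at hrho1 with hlammu
  · rcases le_or_gt mu 1 with hmu1 | hmu1
    · calc lam * mu ^ rho ≤ lam * 1 := by gcongr; exact Real.rpow_le_one hmu.le hmu1 hrho0.le
        _ < 1 := by linarith
    · calc lam * mu ^ rho < lam * mu ^ (1 : ℝ) := by
            gcongr; exact Real.rpow_lt_rpow_of_exponent_lt hmu1 hrho1
        _ < 1 := by rwa [Real.rpow_one]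
  · have hmu1 : 1 < mu := by
      by_contra! h
      exact hlammu (by nlinarith)
    have hlog : rho * Real.log mu + Real.log lam < 0 := by
      rw [lt_div_iff₀ (Real.log_pos hmu1)] at hrho1; linarith
    rw [← Real.log_neg_iff (by positivity), Real.log_mul hlam0.ne' (Real.rpow_pos_of_pos hmu _).ne',
      Real.log_rpow hmu]
    linarith

lemma zpow_ceil_le_rpow {x : ℝ} (hx0 : 0 < x) (hx1 : x ≤ 1) (t : ℝ) : x ^ ⌈t⌉ ≤ x ^ t := by
  rw [← Real.rpow_intCast]
  exact Real.rpow_le_rpow_of_exponent_ge hx0 hx1 (Int.le_ceil t)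

lemma summable_zpow_ceil_div_mul_pow {lam mu rho : ℝ} (hlam0 : 0 < lam) (hlam1 : lam < 1)
    (hmu : 0 < mu) (hrho0 : 0 < rho) (hlmr : lam * mu ^ rho < 1) :
    Summable fun h : ℕ => lam ^ ⌈((h : ℝ) + 1) / rho⌉ * mu ^ (h + 1) := by
  have hq : (lam * mu ^ rho) ^ rho⁻¹ < 1 := Real.rpow_lt_one (by positivity) hlmr (inv_pos.2 hrho0)
  have hterm (h : ℕ) :
      lam ^ (((h : ℝ) + 1) / rho) * mu ^ (h + 1) = ((lam * mu ^ rho) ^ rho⁻¹) ^ (h + 1) := by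
    rw [Real.mul_rpow hlam0.le (by positivity), Real.rpow_rpow_inv hmu.le hrho0.ne', mul_pow,
      ← Real.rpow_mul_natCast hlam0.le]
    push_cast
    ring_nf
  refine Summable.of_nonneg_of_le (fun h => by positivity) (fun h => ?_)
    ((summable_nat_add_iff 1).2 (summable_geometric_of_lt_one (by positivity) hq))
  rw [← hterm]
  gcongr
  exact zpow_ceil_le_rpow hlam0 hlam1.le _

lemma le_toNat_floor_mul_iff_ceil_div_le {rho : ℝ} (hrho0 : 0 < rho) (n m : ℕ) :
    n ≤ ⌊(m : ℝ) * rho⌋.toNat ↔ ⌈(n : ℝ) / rho⌉ ≤ m := by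
  rw [Int.floor_toNat, Nat.le_floor_iff (by positivity), Int.ceil_le, div_le_iff₀ hrho0]
  norm_cast

lemma hasSum_ite_le_pow_succ {x : ℝ} (hx0 : 0 ≤ x) (hx1 : x < 1) {m : ℤ} (hm : 0 < m) :
    HasSum (fun k : ℕ => if m ≤ (k : ℤ) + 1 then x ^ (k + 1) else 0) (x ^ m / (1 - x)) := by
  lift m to ℕ using hm.le
  have hinj : Function.Injective fun j : ℕ => j + (m - 1) := add_left_injective _
  rw [← hinj.hasSum_iff, zpow_natCast, div_eq_mul_inv]
  · refine ((hasSum_geometric_of_lt_one hx0 hx1).mul_left (x ^ m)).congr_fun fun j => ?_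
    rw [Function.comp_apply, if_pos (by omega), ← pow_add]
    congr 1
    omega
  · rintro k hk
    rw [if_neg]
    intro hle
    exact hk ⟨k - (m - 1), by simp only; omega⟩

/-- The term of `Psi` at `(k + 1, h + 1)`, with `h + 1 ≤ (k + 1) ρ` written as
`⌈(h + 1) / ρ⌉ ≤ k + 1`. -/
noncomputable def psiTerm (lam mu rho : ℝ) (k h : ℕ) : ℝ :=
  if ⌈((h : ℝ) + 1) / rho⌉ ≤ (k : ℤ) + 1 then lam ^ (k + 1) * mu ^ (h + 1) else 0

section psiTerm

variable {lam mu rho : ℝ}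

lemma sum_Icc_eq_tsum_psiTerm (hrho0 : 0 < rho) (k : ℕ) :
    ∑ h ∈ Icc 1 (⌊((k : ℝ) + 1) * rho⌋.toNat), lam ^ (k + 1) * mu ^ h =
      ∑' h, psiTerm lam mu rho k h := by
  have hmem (h : ℕ) : h < ⌊((k : ℝ) + 1) * rho⌋.toNat ↔ ⌈((h : ℝ) + 1) / rho⌉ ≤ (k : ℤ) + 1 := by
    have := le_toNat_floor_mul_iff_ceil_div_le hrho0 (h + 1) (k + 1)
    push_cast at this
    exact Nat.add_one_le_iff.symm.trans this
  rw [tsum_eq_sum (s := range ⌊((k : ℝ) + 1) * rho⌋.toNat) fun h hh => by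
      rw [psiTerm, if_neg (mt (hmem h).2 (mem_range.not.1 hh))],
    ← Ico_add_one_right_eq_Icc, sum_Ico_eq_sum_range, Nat.add_sub_cancel]
  refine sum_congr rfl fun h hh => ?_
  rw [psiTerm, if_pos ((hmem h).1 (mem_range.1 hh)), add_comm 1 h]

lemma hasSum_psiTerm_column (hlam0 : 0 < lam) (hlam1 : lam < 1) (hrho0 : 0 < rho) (h : ℕ) :
    HasSum (fun k => psiTerm lam mu rho k h)
      (1 / (1 - lam) * (lam ^ ⌈((h : ℝ) + 1) / rho⌉ * mu ^ (h + 1))) := by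
  have hceil : 0 < ⌈((h : ℝ) + 1) / rho⌉ := Int.ceil_pos.2 (by positivity)
  rw [show ∀ a b : ℝ, 1 / (1 - lam) * (a * b) = a / (1 - lam) * b by intros; ring]
  refine ((hasSum_ite_le_pow_succ hlam0.le hlam1 hceil).mul_right (mu ^ (h + 1))).congr_fun
    fun k => ?_
  rw [psiTerm, ite_mul, zero_mul]

lemma summable_psiTerm (hlam0 : 0 < lam) (hlam1 : lam < 1) (hmu : 0 < mu) (hrho0 : 0 < rho)
    (hlmr : lam * mu ^ rho < 1) : Summable (Function.uncurry (psiTerm lam mu rho)) := by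
  have hnonneg : 0 ≤ fun p : ℕ × ℕ => psiTerm lam mu rho p.2 p.1 := fun p => by
    dsimp only [Pi.zero_apply, psiTerm]
    split_ifs <;> positivity
  refine ((summable_prod_of_nonneg hnonneg).2
    ⟨fun h => (hasSum_psiTerm_column hlam0 hlam1 hrho0 h).summable, ?_⟩).prod_symm
  simp_rw [(hasSum_psiTerm_column hlam0 hlam1 hrho0 _).tsum_eq]
  exact (summable_zpow_ceil_div_mul_pow hlam0 hlam1 hmu hrho0 hlmr).mul_left _

end psiTerm

theorem stmt4_general (lam mu rho : ℝ) (hlam0 : 0 < lam) (hlam1 : lam < 1) (hmu : 0 < mu)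
    (hrho0 : 0 < rho)
    (hrho1 : rho < if lam * mu < 1 then 1 else -Real.log lam / Real.log mu) :
    Psi lam mu rho =
      (1 / (1 - lam)) * ∑' h : ℕ, lam ^ ⌈((h : ℝ) + 1) / rho⌉ * mu ^ (h + 1) := by
  have hsum := summable_psiTerm hlam0 hlam1 hmu hrho0
    (mul_rpow_lt_one_of_lt_radius hlam0 hlam1 hmu hrho0 hrho1)
  calc Psi lam mu rho = ∑' k, ∑' h, psiTerm lam mu rho k h :=
        tsum_congr fun k => sum_Icc_eq_tsum_psiTerm hrho0 k
    _ = ∑' h, ∑' k, psiTerm lam mu rho k h := hsum.tsum_comm.symm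
    _ = ∑' h : ℕ, 1 / (1 - lam) * (lam ^ ⌈((h : ℝ) + 1) / rho⌉ * mu ^ (h + 1)) :=
        tsum_congr fun h => (hasSum_psiTerm_column hlam0 hlam1 hrho0 h).tsum_eq
    _ = _ := tsum_mul_left

theorem stmt4 (lam mu rho : ℝ) (hlam0 : 0 < lam) (hlam1 : lam < 1) (hmu : 0 < mu)
    (hrho0 : 0 < rho)
    (hrho1 : rho < if lam * mu < 1 then 1 else -Real.log lam / Real.log mu)
    (hirr : Irrational rho) :
    Psi lam mu rho =
      (1 / (1 - lam)) * ∑' h : ℕ, lam ^ ⌈((h : ℝ) + 1) / rho⌉ * mu ^ (h + 1) :=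
  stmt4_general lam mu rho hlam0 hlam1 hmu hrho0 hrho1
end

section
/- For 0 < λ < 1, μ > 0, 0 < ρ < r_{λ,μ}, 1−λ < δ < d_{λ,μ}, the function φ_{λ,μ,δ,ρ} satisfies φ(y+1) = φ(y) + 1 for every real y, and is non-decreasing on [0,1); if moreover ρ is irrational it is strictly increasing on [0,1). -/
/-!
For `y ∈ [0, 1)` put `e k = ⌈kρ - y⌉₊ = -⌊y - kρ⌋`; since `0 < ρ < 1` this counter starts at `0`
and grows by steps `0` or `1`. With `G n = ∑_{i<n} μ^i`, the identities `μ^n = 1 + (μ - 1) G n` and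
`μ^n = G (n + 1) - G n` let one sum the series defining `φ` by parts:
`φ y = A + B ∑ₖ λ^k G (e k)` with `B = ((λ + δ - 1)(μ - 1) - (1 - λ)) / λ`, and the bounds on `δ`
give `B < 0`. Each `e k` is non-increasing in `y`, whence monotonicity; for irrational `ρ` the
fractional parts of `kρ` are dense, so between any two points some `e k` drops strictly.
The bound `ρ < r_{λ,μ}` gives `λ · max(1, μ)^ρ < 1`, which makes all the series converge.
-/

/-- The conjugation function φ_{λ,μ,δ,ρ}. -/
noncomputable def phiFn (lam mu del rho y : ℝ) : ℝ :=
  (⌊y⌋ : ℝ) + (1 - del) / lam +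
    ∑' k : ℕ, lam ^ k * mu ^ (⌊y⌋ - ⌊y - (k : ℝ) * rho⌋) *
      ((lam + del - 1) / lam + ((⌊y - ((k : ℝ) + 1) * rho⌋ : ℝ) - (⌊y - (k : ℝ) * rho⌋ : ℝ)))

open Finset

theorem phiFn_add_one (lam mu del rho y : ℝ) :
    phiFn lam mu del rho (y + 1) = phiFn lam mu del rho y + 1 := by
  have hfloor : ∀ t : ℝ, ⌊y + 1 - t⌋ = ⌊y - t⌋ + 1 := fun t => by
    rw [add_sub_right_comm, Int.floor_add_one]
  simp only [phiFn, hfloor, Int.floor_add_one, add_sub_add_right_eq_sub, Int.cast_add,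
    Int.cast_one]
  ring

noncomputable def rBound (lam mu : ℝ) : ℝ :=
  if lam * mu < 1 then 1 else -Real.log lam / Real.log mu

noncomputable def dBound (lam mu : ℝ) : ℝ :=
  if lam * mu < 1 then 1 else (mu - lam * mu) / (mu - 1)

theorem lt_one_of_lt_rBound {lam mu rho : ℝ} (hlam0 : 0 < lam) (hlam1 : lam < 1) (hmu : 0 < mu)
    (hrho : rho < rBound lam mu) : rho < 1 := by
  unfold rBound at hrho
  split_ifs at hrho with h
  · exact hrho
  · have hlog : 0 ≤ Real.log lam + Real.log mu := by
      rw [← Real.log_mul hlam0.ne' hmu.ne']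
      exact Real.log_nonneg (not_lt.1 h)
    have hloglam := Real.log_neg hlam0 hlam1
    exact hrho.trans_le ((div_le_one (by linarith)).2 (by linarith))

theorem mul_max_one_rpow_lt_one_of_lt_rBound {lam mu rho : ℝ} (hlam0 : 0 < lam)
    (hlam1 : lam < 1) (hmu : 0 < mu) (hrho : rho < rBound lam mu) :
    lam * max 1 mu ^ rho < 1 := by
  unfold rBound at hrho
  split_ifs at hrho with h
  · calc lam * max 1 mu ^ rho ≤ lam * max 1 mu ^ (1 : ℝ) := by
          gcongr
          exact le_max_left _ _
      _ = max lam (lam * mu) := by rw [Real.rpow_one, mul_max_of_nonneg _ _ hlam0.le, mul_one]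
      _ < 1 := max_lt hlam1 h
  · have hmu1 : 1 < mu := by
      by_contra! hmu1
      exact h (by nlinarith)
    rw [lt_div_iff₀ (Real.log_pos hmu1)] at hrho
    rw [max_eq_right hmu1.le, ← Real.log_neg_iff (by positivity), Real.log_mul hlam0.ne' (by positivity),
      Real.log_rpow hmu]
    linarith

theorem mul_sub_one_lt_of_lt_dBound {lam mu del : ℝ} (hlam1 : lam < 1) (hdel1 : 1 - lam < del)
    (hdel2 : del < dBound lam mu) : (lam + del - 1) * (mu - 1) < 1 - lam := by
  unfold dBound at hdel2
  rcases le_or_gt mu 1 with hmu1 | hmu1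
  · nlinarith
  split_ifs at hdel2 with h
  · nlinarith
  · rw [lt_div_iff₀ (by linarith)] at hdel2
    linarith

theorem geomSum_le_mul_max_pow (mu : ℝ) (hmu : 0 ≤ mu) (n : ℕ) :
    ∑ i ∈ range n, mu ^ i ≤ n * max 1 mu ^ n := by
  simpa using sum_le_card_nsmul (range n) _ _ fun i hi =>
    (pow_le_pow_left₀ hmu (le_max_right 1 mu) i).trans
      (pow_le_pow_right₀ (le_max_left 1 mu) (mem_range.1 hi).le)

theorem summable_pow_mul_geomSum {lam mu rho : ℝ} {e : ℕ → ℕ} (hlam : 0 ≤ lam) (hmu : 0 ≤ mu)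
    (hrho : 0 ≤ rho) (hq : lam * max 1 mu ^ rho < 1) (he : ∀ k, (e k : ℝ) ≤ k * rho + 1) :
    Summable fun k => lam ^ k * ∑ i ∈ range (e k), mu ^ i := by
  set M := max 1 mu
  have hM : 1 ≤ M := le_max_left 1 mu
  set q := lam * M ^ rho
  have hq0 : 0 ≤ q := by positivity
  have hbound : ∀ k : ℕ, lam ^ k * ∑ i ∈ range (e k), mu ^ i ≤
      M * (rho * (k * q ^ k) + q ^ k) := by
    intro k
    have hpow : M ^ e k ≤ M * (M ^ rho) ^ k := by
      calc M ^ e k = M ^ (e k : ℝ) := (Real.rpow_natCast M _).symm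
        _ ≤ M ^ (k * rho + 1) := Real.rpow_le_rpow_of_exponent_le hM (he k)
        _ = M * (M ^ rho) ^ k := by
          rw [Real.rpow_add (by linarith), Real.rpow_one, ← Real.rpow_natCast,
            ← Real.rpow_mul (by linarith), mul_comm rho, mul_comm]
    calc lam ^ k * ∑ i ∈ range (e k), mu ^ i ≤ lam ^ k * (e k * M ^ e k) := by
          gcongr
          exact geomSum_le_mul_max_pow mu hmu _
      _ ≤ lam ^ k * ((k * rho + 1) * (M * (M ^ rho) ^ k)) := by gcongr; exact he k
      _ = M * (rho * (k * q ^ k) + q ^ k) := by simp only [q, mul_pow]; ring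
  refine Summable.of_nonneg_of_le (fun k => by positivity) hbound (Summable.mul_left _ ?_)
  have hgeom := summable_geometric_of_lt_one hq0 hq
  have hkgeom : Summable fun k : ℕ => (k : ℝ) * q ^ k := by
    simpa using summable_pow_mul_geometric_of_norm_lt_one 1 (by rwa [Real.norm_of_nonneg hq0])
  exact (hkgeom.mul_left rho).add hgeom

theorem geomSum_strictMono {mu : ℝ} (hmu : 0 < mu) :
    StrictMono fun n : ℕ => ∑ i ∈ range n, mu ^ i :=
  strictMono_nat_of_lt_succ fun n => by
    simpa [sum_range_succ] using pow_pos hmu n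

theorem pow_mul_sub_step_eq (mu c : ℝ) {n n' : ℕ} (h : n ≤ n') (h' : n' ≤ n + 1) :
    mu ^ n * (c - ((n' : ℝ) - n)) =
      c + (c * (mu - 1) + 1) * ∑ i ∈ range n, mu ^ i - ∑ i ∈ range n', mu ^ i := by
  have hgeom := geom_sum_mul mu n
  obtain rfl | rfl : n' = n ∨ n' = n + 1 := by omega
  · simp only [sub_self]
    linear_combination -c * hgeom
  · rw [sum_range_succ]
    push_cast
    linear_combination -c * hgeom

theorem tsum_pow_mul_pow_mul_sub_step {lam mu c : ℝ} {e : ℕ → ℕ} (hlam0 : 0 < lam)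
    (hlam1 : lam < 1) (he0 : e 0 = 0) (hmono : ∀ k, e k ≤ e (k + 1))
    (hstep : ∀ k, e (k + 1) ≤ e k + 1)
    (hS : Summable fun k => lam ^ k * ∑ i ∈ range (e k), mu ^ i) :
    ∑' k, lam ^ k * mu ^ e k * (c - ((e (k + 1) : ℝ) - e k)) =
      c / (1 - lam) + (c * (mu - 1) + 1 - lam⁻¹) *
        ∑' k, lam ^ k * ∑ i ∈ range (e k), mu ^ i := by
  set f : ℕ → ℝ := fun k => lam ^ k * ∑ i ∈ range (e k), mu ^ i
  have hterm : ∀ k, lam ^ k * mu ^ e k * (c - ((e (k + 1) : ℝ) - e k)) =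
      c * lam ^ k + (c * (mu - 1) + 1) * f k - lam⁻¹ * f (k + 1) := by
    intro k
    rw [mul_assoc, pow_mul_sub_step_eq mu c (hmono k) (hstep k)]
    simp only [f, pow_succ]
    field_simp
  have hshift : ∑' k, f (k + 1) = ∑' k, f k := by
    rw [hS.tsum_eq_zero_add]
    simp [f, he0]
  have hgeom := summable_geometric_of_lt_one hlam0.le hlam1
  rw [tsum_congr hterm, (((hgeom.mul_left c).add (hS.mul_left _))).tsum_sub
    (((summable_nat_add_iff 1).mpr hS).mul_left _), (hgeom.mul_left c).tsum_add (hS.mul_left _),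
    tsum_mul_left, tsum_mul_left, tsum_mul_left, hshift, tsum_geometric_of_lt_one hlam0.le hlam1]
  ring

noncomputable def phiSeries (lam mu rho y : ℝ) : ℝ :=
  ∑' k : ℕ, lam ^ k * ∑ i ∈ range ⌈k * rho - y⌉₊, mu ^ i

section Counter

variable {rho y : ℝ}

theorem natCeil_mul_sub_le (hrho : 0 ≤ rho) (hy : 0 ≤ y) (k : ℕ) :
    (⌈k * rho - y⌉₊ : ℝ) ≤ k * rho + 1 := by
  have hk : 0 ≤ (k : ℝ) * rho := by positivity
  calc (⌈k * rho - y⌉₊ : ℝ) ≤ ⌈k * rho⌉₊ := by gcongr; linarith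
    _ ≤ k * rho + 1 := (Nat.ceil_lt_add_one hk).le

theorem natCeil_mul_sub_le_succ (hrho : 0 ≤ rho) (k : ℕ) :
    ⌈k * rho - y⌉₊ ≤ ⌈(k + 1 : ℕ) * rho - y⌉₊ :=
  Nat.ceil_mono (by push_cast; linarith)

theorem natCeil_succ_mul_sub_le (hrho1 : rho ≤ 1) (k : ℕ) :
    ⌈(k + 1 : ℕ) * rho - y⌉₊ ≤ ⌈k * rho - y⌉₊ + 1 :=
  calc ⌈(k + 1 : ℕ) * rho - y⌉₊ = ⌈(k * rho - y) + rho⌉₊ := by push_cast; ring_nf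
    _ ≤ ⌈k * rho - y⌉₊ + ⌈rho⌉₊ := Nat.ceil_add_le _ _
    _ ≤ ⌈k * rho - y⌉₊ + 1 := by gcongr; exact Nat.ceil_le.2 (by simpa using hrho1)

theorem natCast_natCeil_sub {t : ℝ} (ht : 0 ≤ t) (hy : y < 1) :
    (⌈t - y⌉₊ : ℤ) = -⌊y - t⌋ := by
  rw [Int.natCast_ceil_eq_ceil_of_neg_one_lt (by linarith), ← neg_sub, Int.ceil_neg]

end Counter

theorem summable_phiSeries_terms {lam mu rho y : ℝ} (hlam : 0 ≤ lam) (hmu : 0 ≤ mu)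
    (hrho : 0 ≤ rho) (hq : lam * max 1 mu ^ rho < 1) (hy : 0 ≤ y) :
    Summable fun k : ℕ => lam ^ k * ∑ i ∈ range ⌈k * rho - y⌉₊, mu ^ i :=
  summable_pow_mul_geomSum hlam hmu hrho hq (natCeil_mul_sub_le hrho hy)

theorem phiFn_eq_phiSeries {lam mu del rho y : ℝ} (hlam0 : 0 < lam) (hlam1 : lam < 1)
    (hmu : 0 ≤ mu) (hrho0 : 0 ≤ rho) (hrho1 : rho ≤ 1) (hq : lam * max 1 mu ^ rho < 1)
    (hy : y ∈ Set.Ico 0 1) :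
    phiFn lam mu del rho y = (1 - del) / lam + (lam + del - 1) / lam / (1 - lam) +
      ((lam + del - 1) * (mu - 1) - (1 - lam)) / lam * phiSeries lam mu rho y := by
  set e : ℕ → ℕ := fun k => ⌈k * rho - y⌉₊
  have hterm : ∀ k : ℕ, lam ^ k * mu ^ (⌊y⌋ - ⌊y - (k : ℝ) * rho⌋) *
      ((lam + del - 1) / lam + ((⌊y - ((k : ℝ) + 1) * rho⌋ : ℝ) - (⌊y - (k : ℝ) * rho⌋ : ℝ))) =
      lam ^ k * mu ^ e k * ((lam + del - 1) / lam - ((e (k + 1) : ℝ) - e k)) := by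
    intro k
    have hk : ⌊y - k * rho⌋ = -(e k : ℤ) := by
      linarith [natCast_natCeil_sub (by positivity : (0 : ℝ) ≤ k * rho) hy.2]
    have hk1 : ⌊y - (k + 1) * rho⌋ = -(e (k + 1) : ℤ) := by
      simp only [e]
      push_cast
      linarith [natCast_natCeil_sub (by positivity : (0 : ℝ) ≤ (k + 1) * rho) hy.2]
    rw [Int.floor_eq_zero_iff.2 hy, hk, hk1, zero_sub, neg_neg, zpow_natCast]
    push_cast
    ring
  have he0 : e 0 = 0 := Nat.ceil_eq_zero.2 (by simpa using hy.1)
  rw [phiFn, tsum_congr hterm, tsum_pow_mul_pow_mul_sub_step hlam0 hlam1 he0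
    (natCeil_mul_sub_le_succ hrho0) (natCeil_succ_mul_sub_le hrho1)
    (summable_phiSeries_terms hlam0.le hmu hrho0 hq hy.1), Int.floor_eq_zero_iff.2 hy, phiSeries]
  field_simp
  push_cast
  ring

theorem exists_nat_mul_mem_Ioo {β a b : ℝ} (hβ : 0 < β) (ha : 0 ≤ a) (hβab : β < b - a) :
    ∃ m : ℕ, (m : ℝ) * β ∈ Set.Ioo a b := by
  refine ⟨⌊a / β⌋₊ + 1, ?_, ?_⟩
  · have := Nat.lt_floor_add_one (a / β)
    push_cast
    rwa [div_lt_iff₀ hβ] at this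
  · have := Nat.floor_le (div_nonneg ha hβ.le)
    push_cast
    calc ((⌊a / β⌋₊ : ℝ) + 1) * β ≤ (a / β + 1) * β := by gcongr
      _ = a + β := by field_simp
      _ < b := by linarith

/- By Dirichlet, `kρ` lies within `|β| < y - x` of an integer, with `β ≠ 0` by irrationality; the
multiples `m * k` then move the fractional part in steps of `|β|`, up from `0` or down from `1`. -/
theorem exists_nat_fract_mul_mem_Ioo {rho x y : ℝ} (hrho : Irrational rho) (hx : 0 ≤ x)
    (hxy : x < y) (hy : y ≤ 1) : ∃ k : ℕ, Int.fract (k * rho) ∈ Set.Ioo x y := by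
  obtain ⟨N, hN⟩ := exists_nat_one_div_lt (sub_pos.2 hxy)
  obtain ⟨k, hk, -, hβ⟩ := Real.exists_nat_abs_mul_sub_round_le rho N.succ_pos
  set β := k * rho - round (k * rho)
  have hβ_lt : |β| < y - x := by
    refine hβ.trans_lt (lt_of_le_of_lt ?_ hN)
    gcongr
    simp
  have hβ0 : β ≠ 0 := sub_ne_zero.2 ((hrho.natCast_mul hk.ne').ne_int _)
  rcases hβ0.lt_or_gt with hneg | hpos
  · rw [abs_of_neg hneg] at hβ_lt
    obtain ⟨m, hm1, hm2⟩ := exists_nat_mul_mem_Ioo (a := 1 - y) (b := 1 - x) (neg_pos.2 hneg)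
      (by linarith) (by linarith)
    refine ⟨m * k, ?_⟩
    rw [(Int.fract_eq_iff (b := 1 + m * β)).2
      ⟨by linarith, by linarith, m * round (k * rho) - 1, by simp only [β]; push_cast; ring⟩]
    constructor <;> linarith
  · rw [abs_of_pos hpos] at hβ_lt
    obtain ⟨m, hm1, hm2⟩ := exists_nat_mul_mem_Ioo hpos hx hβ_lt
    refine ⟨m * k, ?_⟩
    rw [(Int.fract_eq_iff (b := m * β)).2
      ⟨by linarith, by linarith, m * round (k * rho), by simp only [β]; push_cast; ring⟩]
    exact ⟨hm1, hm2⟩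

section Monotone

variable {lam mu rho : ℝ}

theorem phiSeries_antitoneOn (hlam : 0 ≤ lam) (hmu : 0 ≤ mu) (hrho : 0 ≤ rho)
    (hq : lam * max 1 mu ^ rho < 1) : AntitoneOn (phiSeries lam mu rho) (Set.Ici 0) := by
  intro x hx y hy hxy
  refine (summable_phiSeries_terms hlam hmu hrho hq hy).tsum_le_tsum (fun k => ?_)
    (summable_phiSeries_terms hlam hmu hrho hq hx)
  gcongr

theorem natCeil_sub_lt_natCeil_sub_of_fract_mem {t x y : ℝ} (ht : 0 ≤ t)
    (hfract : Int.fract t ∈ Set.Ioo x y) : ⌈t - y⌉₊ < ⌈t - x⌉₊ := by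
  have hfloor : (⌊t⌋₊ : ℝ) = t - Int.fract t := by
    rw [natCast_floor_eq_intCast_floor ht, Int.fract]
    ring
  exact (Nat.ceil_le.2 (by linarith [hfract.2])).trans_lt (Nat.lt_ceil.2 (by linarith [hfract.1]))

theorem phiSeries_strictAntiOn (hlam : 0 < lam) (hmu : 0 < mu) (hrho : 0 ≤ rho)
    (hq : lam * max 1 mu ^ rho < 1) (hirr : Irrational rho) :
    StrictAntiOn (phiSeries lam mu rho) (Set.Ico 0 1) := by
  intro x hx y hy hxy
  obtain ⟨k, hk⟩ := exists_nat_fract_mul_mem_Ioo hirr hx.1 hxy hy.2.le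
  refine (summable_phiSeries_terms hlam.le hmu.le hrho hq hy.1).tsum_lt_tsum (i := k)
    (fun j => ?_) ?_ (summable_phiSeries_terms hlam.le hmu.le hrho hq hx.1)
  · gcongr
  · gcongr
    exact geomSum_strictMono hmu (natCeil_sub_lt_natCeil_sub_of_fract_mem (by positivity) hk)

end Monotone

theorem stmt11 (lam mu del rho : ℝ) (hlam0 : 0 < lam) (hlam1 : lam < 1) (hmu : 0 < mu)
    (hdel1 : 1 - lam < del)
    (hdel2 : del < if lam * mu < 1 then 1 else (mu - lam * mu) / (mu - 1))
    (hrho0 : 0 < rho)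
    (hrho1 : rho < if lam * mu < 1 then 1 else -Real.log lam / Real.log mu) :
    (∀ y : ℝ, phiFn lam mu del rho (y + 1) = phiFn lam mu del rho y + 1) ∧
    MonotoneOn (phiFn lam mu del rho) (Set.Ico 0 1) ∧
    (Irrational rho → StrictMonoOn (phiFn lam mu del rho) (Set.Ico 0 1)) := by
  have hrho1' := lt_one_of_lt_rBound hlam0 hlam1 hmu hrho1
  have hq := mul_max_one_rpow_lt_one_of_lt_rBound hlam0 hlam1 hmu hrho1
  have hB : ((lam + del - 1) * (mu - 1) - (1 - lam)) / lam < 0 :=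
    div_neg_of_neg_of_pos (by linarith [mul_sub_one_lt_of_lt_dBound hlam1 hdel1 hdel2]) hlam0
  have hphi := fun y (hy : y ∈ Set.Ico (0 : ℝ) 1) =>
    phiFn_eq_phiSeries (del := del) hlam0 hlam1 hmu.le hrho0.le hrho1'.le hq hy
  refine ⟨phiFn_add_one lam mu del rho, fun x hx y hy hxy => ?_, fun hirr x hx y hy hxy => ?_⟩
  · rw [hphi x hx, hphi y hy]
    linarith [mul_le_mul_of_nonpos_left
      (phiSeries_antitoneOn hlam0.le hmu.le hrho0.le hq hx.1 hy.1 hxy) hB.le]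
  · rw [hphi x hx, hphi y hy]
    linarith [mul_lt_mul_of_neg_left
      (phiSeries_strictAntiOn hlam0 hmu hrho0.le hq hirr hx hy hxy) hB]
end

section
/- Let ρ be irrational with 0 < ρ < r_{λ,μ}, δ = δ(λ,μ,ρ) and φ = φ_{λ,μ,δ,ρ}. Then φ(0) = 0 and φ(1−ρ) = (1−δ)/λ. -/
/-!
Write `G k = λ^(k+1) μ^⌊(k+1)ρ⌋` and `D k = ⌊(k+2)ρ⌋ - ⌊(k+1)ρ⌋ ∈ {0, 1}`. Since
`μ^(D k) = 1 + (μ - 1) D k`, one has `λ G k (1 + (μ - 1) D k) = G (k+1)`; summing over `k` gives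
`(1 - λ) ∑ G = λ (1 + (μ - 1) σ)`, and this is exactly what makes `∑ G k ((λ + δ - 1)/λ - D k) = 0`.
For irrational `ρ`, `⌊-x⌋ = -⌊x⌋ - 1` and `⌊1 - x⌋ = -⌊x⌋` at `x = (k+1)ρ`, so the series in
`φ(1 - ρ)` is `λ⁻¹` times this vanishing series, and the series in `φ(0)` is its first term
`(λ + δ - 1)/λ - 1` plus `μ` times it.
-/

/-- σ(λ,μ,ρ) = Σ_{k≥1} (⌊(k+1)ρ⌋ − ⌊kρ⌋) λ^k μ^{⌊kρ⌋}. -/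
noncomputable def sigmaFn (lam mu rho : ℝ) : ℝ :=
  ∑' k : ℕ, ((⌊((k : ℝ) + 2) * rho⌋ - ⌊((k : ℝ) + 1) * rho⌋ : ℤ) : ℝ) *
    lam ^ (k + 1) * mu ^ ⌊((k : ℝ) + 1) * rho⌋

/-- δ(λ,μ,ρ) = (1−λ)(1+μσ)/(1+(μ−1)σ). -/
noncomputable def deltaFn (lam mu rho : ℝ) : ℝ :=
  (1 - lam) * (1 + mu * sigmaFn lam mu rho) / (1 + (mu - 1) * sigmaFn lam mu rho)

lemma Int.floor_neg_of_irrational {x : ℝ} (hx : Irrational x) : ⌊-x⌋ = -⌊x⌋ - 1 := by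
  have hceil : ⌈x⌉ = ⌊x⌋ + 1 :=
    (Int.ceil_eq_floor_add_one_iff_notMem x).2 fun ⟨m, hm⟩ => hx.ne_int m hm.symm
  rw [Int.floor_neg, hceil]
  ring

lemma Int.floor_one_sub_of_irrational {x : ℝ} (hx : Irrational x) : ⌊1 - x⌋ = -⌊x⌋ := by
  rw [show (1 : ℝ) - x = -x + 1 by ring, Int.floor_add_one, Int.floor_neg_of_irrational hx]
  ring

lemma Irrational.natCast_add_one_mul {x : ℝ} (hx : Irrational x) (k : ℕ) :
    Irrational (((k : ℝ) + 1) * x) := by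
  exact_mod_cast hx.natCast_mul k.succ_ne_zero

lemma Int.floor_add_eq_or {x y : ℝ} (hy0 : 0 ≤ y) (hy1 : y ≤ 1) :
    ⌊x + y⌋ = ⌊x⌋ ∨ ⌊x + y⌋ = ⌊x⌋ + 1 := by
  have hlo : ⌊x⌋ ≤ ⌊x + y⌋ := Int.floor_le_floor (by linarith)
  have hhi : ⌊x + y⌋ ≤ ⌊x⌋ + 1 := by
    rw [← Int.floor_add_one]
    exact Int.floor_le_floor (by linarith)
  omega

lemma zpow_floor_le_max_one_rpow {mu x : ℝ} (hmu : 0 < mu) (hx : 0 ≤ x) :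
    mu ^ ⌊x⌋ ≤ max 1 mu ^ x := calc
  mu ^ ⌊x⌋ ≤ max 1 mu ^ ⌊x⌋ :=
    zpow_le_zpow_left₀ (Int.floor_nonneg.2 hx) hmu.le (le_max_right 1 mu)
  _ = max 1 mu ^ (⌊x⌋ : ℝ) := (Real.rpow_intCast _ _).symm
  _ ≤ max 1 mu ^ x := Real.rpow_le_rpow_of_exponent_le (le_max_left 1 mu) (Int.floor_le x)

lemma lt_one_and_mul_max_one_rpow_lt_one {lam mu rho : ℝ} (hlam0 : 0 < lam) (hlam1 : lam < 1)
    (hmu : 0 < mu) (hrho : rho < if lam * mu < 1 then 1 else -Real.log lam / Real.log mu) :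
    rho < 1 ∧ lam * max 1 mu ^ rho < 1 := by
  split_ifs at hrho with hlm
  · refine ⟨hrho, ?_⟩
    rcases le_or_gt mu 1 with hmu1 | hmu1
    · simpa [max_eq_left hmu1] using hlam1
    · have hpow : mu ^ rho < mu := by
        simpa using Real.rpow_lt_rpow_of_exponent_lt hmu1 hrho
      rw [max_eq_right hmu1.le]
      nlinarith
  · have hmu1 : 1 < mu := by nlinarith
    have hlog : 0 < Real.log mu := Real.log_pos hmu1
    have hlog_le : -Real.log lam ≤ Real.log mu := by
      rw [← Real.log_inv]
      exact Real.log_le_log (inv_pos.2 hlam0) ((inv_le_iff_one_le_mul₀ hlam0).2 (by linarith))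
    have hrho_log : rho * Real.log mu < -Real.log lam := (lt_div_iff₀ hlog).1 hrho
    refine ⟨hrho.trans_le ((div_le_one hlog).2 hlog_le), ?_⟩
    have hpow : mu ^ rho < lam⁻¹ := by
      rw [Real.rpow_def_of_pos hmu, ← Real.exp_log (inv_pos.2 hlam0), Real.log_inv]
      exact Real.exp_lt_exp.2 (by linarith)
    rw [max_eq_right hmu1.le]
    calc lam * mu ^ rho < lam * lam⁻¹ := mul_lt_mul_of_pos_left hpow hlam0
      _ = 1 := mul_inv_cancel₀ hlam0.ne'

noncomputable def floorWeight (lam mu rho : ℝ) (k : ℕ) : ℝ :=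
  lam ^ (k + 1) * mu ^ ⌊((k : ℝ) + 1) * rho⌋

noncomputable def floorIncr (rho : ℝ) (k : ℕ) : ℤ :=
  ⌊((k : ℝ) + 2) * rho⌋ - ⌊((k : ℝ) + 1) * rho⌋

noncomputable def weightedDefect (lam mu del rho : ℝ) (k : ℕ) : ℝ :=
  floorWeight lam mu rho k * ((lam + del - 1) / lam - floorIncr rho k)

lemma sigmaFn_eq_tsum (lam mu rho : ℝ) :
    sigmaFn lam mu rho = ∑' k, floorIncr rho k * floorWeight lam mu rho k :=
  tsum_congr fun k => by simp only [floorIncr, floorWeight]; ring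

lemma floorWeight_zero {lam mu rho : ℝ} (hrho0 : 0 ≤ rho) (hrho1 : rho < 1) :
    floorWeight lam mu rho 0 = lam := by
  simp [floorWeight, Int.floor_eq_zero_iff.2 ⟨hrho0, hrho1⟩]

lemma floorWeight_nonneg {lam mu : ℝ} (hlam : 0 ≤ lam) (hmu : 0 < mu) (rho : ℝ) (k : ℕ) :
    0 ≤ floorWeight lam mu rho k :=
  mul_nonneg (pow_nonneg hlam _) (zpow_pos hmu _).le

lemma summable_floorWeight {lam mu rho : ℝ} (hlam : 0 ≤ lam) (hmu : 0 < mu) (hrho : 0 ≤ rho)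
    (hratio : lam * max 1 mu ^ rho < 1) : Summable (floorWeight lam mu rho) := by
  have hgeom : Summable fun k : ℕ => (lam * max 1 mu ^ rho) ^ (k + 1) :=
    (summable_nat_add_iff 1).2 <| summable_geometric_of_lt_one (by positivity) hratio
  refine hgeom.of_nonneg_of_le (floorWeight_nonneg hlam hmu rho) fun k => ?_
  calc floorWeight lam mu rho k ≤ lam ^ (k + 1) * max 1 mu ^ (((k + 1 : ℕ) : ℝ) * rho) := by
        refine mul_le_mul_of_nonneg_left ?_ (pow_nonneg hlam _)
        exact_mod_cast zpow_floor_le_max_one_rpow hmu (by positivity)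
    _ = (lam * max 1 mu ^ rho) ^ (k + 1) := by
        rw [mul_pow, mul_comm _ rho, Real.rpow_mul_natCast (by positivity)]

lemma floorIncr_eq_zero_or_one {rho : ℝ} (hrho0 : 0 ≤ rho) (hrho1 : rho ≤ 1) (k : ℕ) :
    floorIncr rho k = 0 ∨ floorIncr rho k = 1 := by
  have h := Int.floor_add_eq_or (x := ((k : ℝ) + 1) * rho) hrho0 hrho1
  rw [show ((k : ℝ) + 1) * rho + rho = ((k : ℝ) + 2) * rho by ring] at h
  unfold floorIncr
  omega

lemma floorWeight_succ {lam mu rho : ℝ} (hmu : mu ≠ 0) (hrho0 : 0 ≤ rho) (hrho1 : rho ≤ 1)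
    (k : ℕ) : floorWeight lam mu rho (k + 1) =
      lam * floorWeight lam mu rho k * (1 + (mu - 1) * floorIncr rho k) := by
  have hexp : ⌊(((k + 1 : ℕ) : ℝ) + 1) * rho⌋ = ⌊((k : ℝ) + 1) * rho⌋ + floorIncr rho k := by
    rw [floorIncr]; push_cast; ring_nf
  rw [floorWeight, hexp, zpow_add₀ hmu, floorWeight]
  rcases floorIncr_eq_zero_or_one hrho0 hrho1 k with h | h <;>
    simp only [h, zpow_zero, zpow_one, Int.cast_zero, Int.cast_one] <;> ring

section Balance

variable {lam mu rho : ℝ} (hlam : 0 < lam) (hmu : 0 < mu) (hrho0 : 0 ≤ rho) (hrho1 : rho < 1)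
  (hG : Summable (floorWeight lam mu rho))
include hlam hmu hrho0 hrho1 hG

lemma summable_floorIncr_mul_floorWeight :
    Summable fun k => (floorIncr rho k : ℝ) * floorWeight lam mu rho k := by
  refine hG.of_nonneg_of_le (fun k => ?_) (fun k => ?_) <;>
    rcases floorIncr_eq_zero_or_one hrho0 hrho1.le k with h | h <;>
    simp [h, floorWeight_nonneg hlam.le hmu]

lemma one_sub_mul_tsum_floorWeight :
    (1 - lam) * ∑' k, floorWeight lam mu rho k = lam * (1 + (mu - 1) * sigmaFn lam mu rho) := by
  have hσ := summable_floorIncr_mul_floorWeight hlam hmu hrho0 hrho1 hG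
  have hshift : ∑' k, floorWeight lam mu rho (k + 1) =
      lam * (∑' k, floorWeight lam mu rho k + (mu - 1) * sigmaFn lam mu rho) := by
    rw [sigmaFn_eq_tsum, ← tsum_mul_left, ← hG.tsum_add (hσ.mul_left _), ← tsum_mul_left]
    exact tsum_congr fun k => by rw [floorWeight_succ hmu.ne' hrho0 hrho1.le]; ring
  have := hG.tsum_eq_zero_add
  rw [hshift, floorWeight_zero hrho0 hrho1] at this
  linear_combination this

lemma summable_weightedDefect (del : ℝ) : Summable (weightedDefect lam mu del rho) :=
  ((hG.mul_left ((lam + del - 1) / lam)).sub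
    (summable_floorIncr_mul_floorWeight hlam hmu hrho0 hrho1 hG)).congr
    fun k => by rw [weightedDefect]; ring

lemma tsum_weightedDefect_deltaFn (hlam1 : lam < 1) :
    ∑' k, weightedDefect lam mu (deltaFn lam mu rho) rho k = 0 := by
  have hσ := summable_floorIncr_mul_floorWeight hlam hmu hrho0 hrho1 hG
  have hkey := one_sub_mul_tsum_floorWeight hlam hmu hrho0 hrho1 hG
  set S := ∑' k, floorWeight lam mu rho k
  set σ := sigmaFn lam mu rho
  have hS : 0 < S := by
    have := hG.le_tsum 0 fun j _ => floorWeight_nonneg hlam.le hmu rho j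
    rw [floorWeight_zero hrho0 hrho1] at this
    linarith
  have hden : 0 < 1 + (mu - 1) * σ := by
    nlinarith [mul_pos (sub_pos.2 hlam1) hS]
  calc ∑' k, weightedDefect lam mu (deltaFn lam mu rho) rho k
      = (lam + deltaFn lam mu rho - 1) / lam * S - σ := by
        rw [show σ = _ from sigmaFn_eq_tsum lam mu rho, ← tsum_mul_left,
          ← (hG.mul_left _).tsum_sub hσ]
        exact tsum_congr fun k => by rw [weightedDefect]; ring
    _ = 0 := by
        have hδ : lam + deltaFn lam mu rho - 1 = (1 - lam) * σ / (1 + (mu - 1) * σ) := by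
          rw [eq_div_iff hden.ne', deltaFn, sub_mul, add_mul, div_mul_cancel₀ _ hden.ne']
          ring
        rw [hδ, div_div, div_mul_eq_mul_div, div_sub' (by positivity), div_eq_zero_iff]
        left
        linear_combination σ * hkey

end Balance

noncomputable def phiSummand (lam mu del rho y : ℝ) (k : ℕ) : ℝ :=
  lam ^ k * mu ^ (⌊y⌋ - ⌊y - (k : ℝ) * rho⌋) *
    ((lam + del - 1) / lam + ((⌊y - ((k : ℝ) + 1) * rho⌋ : ℝ) - (⌊y - (k : ℝ) * rho⌋ : ℝ)))

lemma phiFn_eq_add_tsum (lam mu del rho y : ℝ) :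
    phiFn lam mu del rho y = ⌊y⌋ + (1 - del) / lam + ∑' k, phiSummand lam mu del rho y k :=
  rfl

section Summands

variable {lam mu del rho : ℝ} (hirr : Irrational rho)
include hirr

lemma phiSummand_zero_zero (hrho0 : 0 < rho) (hrho1 : rho < 1) :
    phiSummand lam mu del rho 0 0 = (lam + del - 1) / lam - 1 := by
  have h : ⌊-rho⌋ = -1 := by
    rw [Int.floor_neg_of_irrational hirr, Int.floor_eq_zero_iff.2 ⟨hrho0.le, hrho1⟩]
    rfl
  simp [phiSummand, h]
  ring

lemma phiSummand_zero_succ (hmu : mu ≠ 0) (k : ℕ) :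
    phiSummand lam mu del rho 0 (k + 1) = mu * weightedDefect lam mu del rho k := by
  have h1 : ⌊(0 : ℝ) - ((k + 1 : ℕ) : ℝ) * rho⌋ = -⌊((k : ℝ) + 1) * rho⌋ - 1 := by
    rw [show (0 : ℝ) - ((k + 1 : ℕ) : ℝ) * rho = -(((k : ℝ) + 1) * rho) by push_cast; ring]
    exact Int.floor_neg_of_irrational (hirr.natCast_add_one_mul k)
  have h2 : ⌊(0 : ℝ) - (((k + 1 : ℕ) : ℝ) + 1) * rho⌋ = -⌊((k : ℝ) + 2) * rho⌋ - 1 := by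
    rw [show (0 : ℝ) - (((k + 1 : ℕ) : ℝ) + 1) * rho = -((((k + 1 : ℕ) : ℝ) + 1) * rho) by ring,
      Int.floor_neg_of_irrational (hirr.natCast_add_one_mul _)]
    push_cast; ring_nf
  rw [phiSummand, h1, h2, Int.floor_zero, weightedDefect, floorWeight, floorIncr,
    show (0 : ℤ) - (-⌊((k : ℝ) + 1) * rho⌋ - 1) = ⌊((k : ℝ) + 1) * rho⌋ + 1 by ring,
    zpow_add_one₀ hmu]
  push_cast
  ring

lemma phiSummand_one_sub (hlam : lam ≠ 0) (hrho0 : 0 < rho) (hrho1 : rho < 1) (k : ℕ) :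
    phiSummand lam mu del rho (1 - rho) k = lam⁻¹ * weightedDefect lam mu del rho k := by
  have h0 : ⌊1 - rho⌋ = 0 := Int.floor_eq_zero_iff.2 ⟨by linarith, by linarith⟩
  have h1 : ⌊1 - rho - (k : ℝ) * rho⌋ = -⌊((k : ℝ) + 1) * rho⌋ := by
    rw [show 1 - rho - (k : ℝ) * rho = 1 - ((k : ℝ) + 1) * rho by ring]
    exact Int.floor_one_sub_of_irrational (hirr.natCast_add_one_mul k)
  have h2 : ⌊1 - rho - ((k : ℝ) + 1) * rho⌋ = -⌊((k : ℝ) + 2) * rho⌋ := by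
    rw [show 1 - rho - ((k : ℝ) + 1) * rho = 1 - (((k + 1 : ℕ) : ℝ) + 1) * rho by push_cast; ring,
      Int.floor_one_sub_of_irrational (hirr.natCast_add_one_mul _)]
    push_cast; ring_nf
  rw [phiSummand, h0, h1, h2, weightedDefect, floorWeight, floorIncr, zero_sub, neg_neg, pow_succ]
  push_cast
  field_simp
  ring

end Summands

lemma phiFn_zero {lam mu del rho : ℝ} (hlam : lam ≠ 0) (hmu : mu ≠ 0) (hirr : Irrational rho)
    (hrho0 : 0 < rho) (hrho1 : rho < 1) (hZ : Summable (weightedDefect lam mu del rho)) :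
    phiFn lam mu del rho 0 = mu * ∑' k, weightedDefect lam mu del rho k := by
  have hsucc := phiSummand_zero_succ (lam := lam) (del := del) hirr hmu
  rw [phiFn_eq_add_tsum, tsum_eq_zero_add' ((hZ.mul_left mu).congr fun k => (hsucc k).symm),
    phiSummand_zero_zero hirr hrho0 hrho1, tsum_congr hsucc, tsum_mul_left, Int.floor_zero]
  field_simp
  ring

lemma phiFn_one_sub {lam mu del rho : ℝ} (hlam : lam ≠ 0) (hirr : Irrational rho)
    (hrho0 : 0 < rho) (hrho1 : rho < 1) :
    phiFn lam mu del rho (1 - rho) =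
      (1 - del) / lam + lam⁻¹ * ∑' k, weightedDefect lam mu del rho k := by
  rw [phiFn_eq_add_tsum, tsum_congr (phiSummand_one_sub hirr hlam hrho0 hrho1), tsum_mul_left,
    Int.floor_eq_zero_iff.2 ⟨by linarith, by linarith⟩]
  simp

theorem stmt12 (lam mu rho : ℝ) (hlam0 : 0 < lam) (hlam1 : lam < 1) (hmu : 0 < mu)
    (hrho0 : 0 < rho)
    (hrho1 : rho < if lam * mu < 1 then 1 else -Real.log lam / Real.log mu)
    (hirr : Irrational rho) :
    phiFn lam mu (deltaFn lam mu rho) rho 0 = 0 ∧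
    phiFn lam mu (deltaFn lam mu rho) rho (1 - rho) = (1 - deltaFn lam mu rho) / lam := by
  obtain ⟨hrho_lt_one, hratio⟩ := lt_one_and_mul_max_one_rpow_lt_one hlam0 hlam1 hmu hrho1
  have hG := summable_floorWeight hlam0.le hmu hrho0.le hratio
  have hZ := tsum_weightedDefect_deltaFn hlam0 hmu hrho0.le hrho_lt_one hG hlam1
  constructor
  · rw [phiFn_zero hlam0.ne' hmu.ne' hirr hrho0 hrho_lt_one
      (summable_weightedDefect hlam0 hmu hrho0.le hrho_lt_one hG _), hZ, mul_zero]
  · rw [phiFn_one_sub hlam0.ne' hirr hrho0 hrho_lt_one, hZ, mul_zero, add_zero]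
end

section
/- Let p, q be coprime positive integers with p < q and 0 < p/q < r_{λ,μ}. Then σ(λ,μ,p/q) = (S + λ^{q−1}μ^{p−1})/(1 − λ^q μ^p), where S = Σ_{k=1}^{q−2} (⌊(k+1)p/q⌋ − ⌊kp/q⌋) λ^k μ^{⌊kp/q⌋} (with S = 0 when q = 2). -/
open Finset

theorem tsum_eq_sum_range_div_of_add_period {K : Type*} [NormedField K] [CompleteSpace K]
    {f : ℕ → K} {q : ℕ} {x : K} (hq : q ≠ 0) (hx : ‖x‖ < 1)
    (hf : ∀ k, f (k + q) = x * f k) :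
    ∑' k, f k = (∑ k ∈ range q, f k) / (1 - x) := by
  have : NeZero q := ⟨hq⟩
  have hblock : ∀ m j, f (m * q + j) = x ^ m * f j := by
    intro m j
    induction m with
    | zero => simp
    | succ m ih => rw [add_mul, one_mul, add_right_comm, hf, ih, pow_succ', mul_assoc]
  have hsum : Summable fun mj : ℕ × Fin q => x ^ mj.1 * f mj.2 :=
    summable_mul_of_summable_norm (f := (x ^ ·)) (g := fun j : Fin q => f j)
      ((summable_geometric_of_lt_one (norm_nonneg x) hx).congr fun m => (norm_pow x m).symm)
      Summable.of_finite
  calc ∑' k, f k = ∑' mj : ℕ × Fin q, f ((Nat.divModEquiv q).symm mj) :=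
        ((Nat.divModEquiv q).symm.tsum_eq f).symm
    _ = ∑' mj : ℕ × Fin q, x ^ mj.1 * f mj.2 := by
        simp only [Nat.divModEquiv_symm_apply, hblock]
    _ = ∑' m, x ^ m * ∑ j : Fin q, f j := by
        rw [hsum.tsum_prod' fun m => Summable.of_finite]
        simp only [tsum_fintype, mul_sum]
    _ = (∑ k ∈ range q, f k) / (1 - x) := by
        rw [tsum_mul_right, tsum_geometric_of_norm_lt_one hx, Fin.sum_univ_eq_sum_range,
          div_eq_inv_mul]

theorem Int.floor_add_natCast_mul_div (y : ℝ) (p : ℕ) {q : ℕ} (hq : q ≠ 0) :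
    ⌊(y + q) * (p / q)⌋ = ⌊y * (p / q)⌋ + p := by
  rw [add_mul, mul_div_cancel₀ _ (Nat.cast_ne_zero.2 hq), Int.floor_add_natCast]

/-- The paper's `r_{λ,μ}`. -/
noncomputable def sigmaRate (lam mu : ℝ) : ℝ :=
  if lam * mu < 1 then 1 else -Real.log lam / Real.log mu

theorem mul_log_add_mul_log_neg_of_div_lt_sigmaRate {lam mu a b : ℝ} (hlam0 : 0 < lam)
    (hlam1 : lam < 1) (hmu : 0 < mu) (ha : 0 ≤ a) (hb : 0 < b) (hr : a / b < sigmaRate lam mu) :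
    b * Real.log lam + a * Real.log mu < 0 := by
  have hloglam : Real.log lam < 0 := Real.log_neg hlam0 hlam1
  unfold sigmaRate at hr
  split_ifs at hr with h
  · have hlogmul : Real.log lam + Real.log mu < 0 := by
      rw [← Real.log_mul hlam0.ne' hmu.ne']; exact Real.log_neg (by positivity) h
    rw [div_lt_one hb] at hr
    nlinarith
  · have hlogmul : 0 ≤ Real.log lam + Real.log mu := by
      rw [← Real.log_mul hlam0.ne' hmu.ne']; exact Real.log_nonneg (not_lt.1 h)
    have hlogmu : 0 < Real.log mu := by linarith
    rw [div_lt_div_iff₀ hb hlogmu] at hr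
    linarith

theorem pow_mul_pow_lt_one_of_div_lt_sigmaRate {lam mu : ℝ} {p q : ℕ} (hlam0 : 0 < lam)
    (hlam1 : lam < 1) (hmu : 0 < mu) (hq : 0 < q) (hr : (p : ℝ) / q < sigmaRate lam mu) :
    lam ^ q * mu ^ p < 1 := by
  have := mul_log_add_mul_log_neg_of_div_lt_sigmaRate hlam0 hlam1 hmu p.cast_nonneg
    (Nat.cast_pos.2 hq) hr
  rwa [← Real.log_neg_iff (by positivity), Real.log_mul (by positivity) (by positivity),
    Real.log_pow, Real.log_pow]

noncomputable def sigmaTerm (lam mu rho : ℝ) (k : ℕ) : ℝ :=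
  ((⌊((k : ℝ) + 1) * rho⌋ - ⌊(k : ℝ) * rho⌋ : ℤ) : ℝ) * lam ^ k * mu ^ ⌊(k : ℝ) * rho⌋

theorem sigmaFn_eq_tsum_sigmaTerm (lam mu rho : ℝ) :
    sigmaFn lam mu rho = ∑' k, sigmaTerm lam mu rho (k + 1) := by
  simp only [sigmaFn, sigmaTerm, Nat.cast_add, Nat.cast_one, add_assoc, one_add_one_eq_two]

section Rational

variable (lam mu : ℝ) {p q : ℕ}

theorem sigmaTerm_add_period (hmu : mu ≠ 0) (hq : q ≠ 0) (k : ℕ) :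
    sigmaTerm lam mu (p / q) (k + q) = lam ^ q * mu ^ p * sigmaTerm lam mu (p / q) k := by
  simp only [sigmaTerm, Nat.cast_add, add_right_comm _ (q : ℝ),
    Int.floor_add_natCast_mul_div _ p hq, zpow_add₀ hmu, zpow_natCast, pow_add]
  push_cast
  ring

theorem sigmaTerm_period_eq_zero (hpq : p < q) : sigmaTerm lam mu (p / q) q = 0 := by
  have hq : q ≠ 0 := by omega
  have h1 := Int.floor_add_natCast_mul_div 1 p hq
  have h0 := Int.floor_add_natCast_mul_div 0 p hq
  have hfloor : ⌊(p : ℝ) / q⌋ = 0 := by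
    rw [Int.floor_eq_zero_iff]; constructor
    · positivity
    · rw [div_lt_one (by positivity)]; exact_mod_cast hpq
  simp_all [sigmaTerm, add_comm]

theorem sigmaTerm_period_sub_one (hp : 0 < p) (hpq : p < q) :
    sigmaTerm lam mu (p / q) (q - 1) = lam ^ (q - 1) * mu ^ (p - 1) := by
  have hq : q ≠ 0 := by omega
  have h1 := Int.floor_add_natCast_mul_div (-1) p hq
  have h0 := Int.floor_add_natCast_mul_div 0 p hq
  have hfloor : ⌊(-1) * ((p : ℝ) / q)⌋ = -1 := by
    rw [Int.floor_eq_iff]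
    have hρ0 : (0 : ℝ) < p / q := by positivity
    have hρ1 : (p : ℝ) / q < 1 := by rw [div_lt_one (by positivity)]; exact_mod_cast hpq
    push_cast
    constructor <;> linarith
  have hcast : ((q - 1 : ℕ) : ℝ) = -1 + q := by rw [Nat.cast_sub (by omega)]; ring
  simp only [sigmaTerm, hcast, neg_add_cancel_comm, zero_mul, zero_add, Int.floor_zero] at h1 h0 ⊢
  rw [h1, h0, hfloor, show (p : ℤ) - (-1 + p) = 1 by ring,
    show (-1 + p : ℤ) = (p - 1 : ℕ) by omega, zpow_natCast, Int.cast_one, one_mul]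

theorem sum_range_sigmaTerm_succ (hp : 0 < p) (hpq : p < q) :
    ∑ k ∈ range q, sigmaTerm lam mu (p / q) (k + 1) =
      ∑ k ∈ Icc 1 (q - 2), sigmaTerm lam mu (p / q) k + lam ^ (q - 1) * mu ^ (p - 1) := by
  obtain ⟨n, rfl⟩ : ∃ n, q = n + 2 := ⟨q - 2, by omega⟩
  have hlast := sigmaTerm_period_eq_zero lam mu hpq
  have hprev := sigmaTerm_period_sub_one lam mu hp hpq
  simp only [Nat.add_sub_cancel, Nat.add_succ_sub_one] at hprev ⊢
  rw [sum_range_succ, sum_range_succ, hprev, hlast, add_zero, range_eq_Ico, sum_Ico_add',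
    zero_add, Finset.Ico_add_one_right_eq_Icc]

end Rational

theorem stmt13_general (lam mu : ℝ) (p q : ℕ) (hlam0 : 0 < lam) (hlam1 : lam < 1) (hmu : 0 < mu)
    (hp : 0 < p) (hpq : p < q)
    (hr : (p : ℝ) / q < if lam * mu < 1 then 1 else -Real.log lam / Real.log mu) :
    sigmaFn lam mu ((p : ℝ) / q) =
      ((∑ k ∈ Finset.Icc 1 (q - 2),
          ((⌊((k : ℝ) + 1) * p / q⌋ - ⌊(k : ℝ) * p / q⌋ : ℤ) : ℝ) *
            lam ^ k * mu ^ ⌊(k : ℝ) * p / q⌋) + lam ^ (q - 1) * mu ^ (p - 1)) /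
        (1 - lam ^ q * mu ^ p) := by
  have hq : q ≠ 0 := by omega
  have hx : ‖lam ^ q * mu ^ p‖ < 1 := by
    rw [Real.norm_of_nonneg (by positivity)]
    exact pow_mul_pow_lt_one_of_div_lt_sigmaRate hlam0 hlam1 hmu (by omega) hr
  have hperiod (k : ℕ) : sigmaTerm lam mu (p / q) (k + q + 1) =
      lam ^ q * mu ^ p * sigmaTerm lam mu (p / q) (k + 1) := by
    rw [add_right_comm]; exact sigmaTerm_add_period lam mu hmu.ne' hq (k + 1)
  rw [sigmaFn_eq_tsum_sigmaTerm, tsum_eq_sum_range_div_of_add_period hq hx hperiod,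
    sum_range_sigmaTerm_succ lam mu hp hpq]
  simp only [sigmaTerm, mul_div_assoc]

theorem stmt13 (lam mu : ℝ) (p q : ℕ) (hlam0 : 0 < lam) (hlam1 : lam < 1) (hmu : 0 < mu)
    (hp : 0 < p) (hq : 0 < q) (hpq : p < q) (hcop : Nat.Coprime p q)
    (hr : (p : ℝ) / q < if lam * mu < 1 then 1 else -Real.log lam / Real.log mu) :
    sigmaFn lam mu ((p : ℝ) / q) =
      ((∑ k ∈ Finset.Icc 1 (q - 2),
          ((⌊((k : ℝ) + 1) * p / q⌋ - ⌊(k : ℝ) * p / q⌋ : ℤ) : ℝ) *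
            lam ^ k * mu ^ ⌊(k : ℝ) * p / q⌋) + lam ^ (q - 1) * mu ^ (p - 1)) /
        (1 - lam ^ q * mu ^ p) :=
  stmt13_general lam mu p q hlam0 hlam1 hmu hp hpq hr
end
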